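/- arXiv:1007.5094 — 2 statements merged into one kernel-verified Lean document; each statement's English description precedes it below -/
import Mathlib

section
/- The product of Stochastic Reo automata is commutative up to the equivalence ∼ on Stochastic Reo automata, where (A₁, r₁, t₁) ∼ (A₂, r₂, t₂) iff A₁ ∼ A₂ (bisimilar Reo automata), r₁ = r₂, and t₁ = t₂ (up to the bisimulation pairing). -/
/-- Guards of the free Boolean algebra over the node set `N`, represented
semantically as sets of truth assignments (atoms correspond to assignments). -/
abbrev Guard (N : Type) := Set (N → Bool)

/-- The conjunction `∧f` of a finite set `f` of nodes. -/
def conjNodes {N : Type} (f : Finset N) : Guard N := {v | ∀ x ∈ f, v x = true}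

/-- Transition relations of a Reo automaton: `δ q g f q'` means `q --g|f--> q'`. -/
abbrev TransRel (N Q : Type) := Q → Guard N → Finset N → Q → Prop

/-- Reactivity: every transition `q --g|f--> q'` satisfies `g ≤ ∧f`. -/
def Reactive {N Q : Type} (δ : TransRel N Q) : Prop :=
  ∀ q g f q', δ q g f q' → g ⊆ conjNodes f

/-- The blocking guard `q^♯ = ¬⋁{g | q --g|f--> q' ∈ δ}`. -/
def blk {N Q : Type} (δ : TransRel N Q) (q : Q) : Guard N :=
  (⋃ g ∈ {g | ∃ f q', δ q g f q'}, g)ᶜ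

/-- The product of two Reo automata (on states `Q₁ × Q₂`). -/
def prodTrans {N Q₁ Q₂ : Type} [DecidableEq N]
    (δ₁ : TransRel N Q₁) (δ₂ : TransRel N Q₂) : TransRel N (Q₁ × Q₂) :=
  fun x g f x' =>
    (∃ g₁ f₁ g₂ f₂, δ₁ x.1 g₁ f₁ x'.1 ∧ δ₂ x.2 g₂ f₂ x'.2 ∧
        g = g₁ ∩ g₂ ∧ f = f₁ ∪ f₂) ∨
    (x'.2 = x.2 ∧ ∃ g₁, δ₁ x.1 g₁ f x'.1 ∧ g = g₁ ∩ blk δ₂ x.2) ∨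
    (x'.1 = x.1 ∧ ∃ g₂, δ₂ x.2 g₂ f x'.2 ∧ g = g₂ ∩ blk δ₁ x.1)

/-- Bisimulations between Reo automata, where atoms are truth assignments `v`. -/
def IsBisim {N Q₁ Q₂ : Type} (δ₁ : TransRel N Q₁) (δ₂ : TransRel N Q₂)
    (R : Q₁ → Q₂ → Prop) : Prop :=
  ∀ q₁ q₂, R q₁ q₂ →
    (∀ g f q₁', δ₁ q₁ g f q₁' → ∀ v ∈ g,
        ∃ g' q₂', δ₂ q₂ g' f q₂' ∧ v ∈ g' ∧ R q₁' q₂') ∧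
    (∀ g f q₂', δ₂ q₂ g f q₂' → ∀ v ∈ g,
        ∃ g' q₁', δ₁ q₁ g' f q₁' ∧ v ∈ g' ∧ R q₁' q₂')

/-- `A₁ ∼ A₂`: a bisimulation relating every state of each automaton
to some state of the other. -/
def Bisimilar {N Q₁ Q₂ : Type} (δ₁ : TransRel N Q₁) (δ₂ : TransRel N Q₂) : Prop :=
  ∃ R, IsBisim δ₁ δ₂ R ∧ (∀ q₁, ∃ q₂, R q₁ q₂) ∧ (∀ q₂, ∃ q₁, R q₁ q₂)

/-- Delay 3-tuples `(I, O, r)` of a Stochastic Reo automaton. -/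
abbrev DelayTuple (N : Type) := Finset N × Finset N × ℝ

/-- Rate functions `t : δ → 2^Θ` of a Stochastic Reo automaton, presented
as functions on all potential transitions. -/
abbrev RateFun (N Q : Type) := Q → Guard N → Finset N → Q → Set (DelayTuple N)

/-- The rate function of the product of two Stochastic Reo automata:
the union `t₁(m₁) ∪ t₂(m₂)` on joint transitions, and the original value
on independent transitions. -/
def prodRateFun {N Q₁ Q₂ : Type} [DecidableEq N]
    (δ₁ : TransRel N Q₁) (δ₂ : TransRel N Q₂)
    (t₁ : RateFun N Q₁) (t₂ : RateFun N Q₂) : RateFun N (Q₁ × Q₂) :=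
  fun x g f x' =>
    {θ | ∃ g₁ f₁ g₂ f₂, δ₁ x.1 g₁ f₁ x'.1 ∧ δ₂ x.2 g₂ f₂ x'.2 ∧
          g = g₁ ∩ g₂ ∧ f = f₁ ∪ f₂ ∧
          θ ∈ t₁ x.1 g₁ f₁ x'.1 ∪ t₂ x.2 g₂ f₂ x'.2} ∪
    {θ | x'.2 = x.2 ∧ ∃ g₁, δ₁ x.1 g₁ f x'.1 ∧ g = g₁ ∩ blk δ₂ x.2 ∧
          θ ∈ t₁ x.1 g₁ f x'.1} ∪
    {θ | x'.1 = x.1 ∧ ∃ g₂, δ₂ x.2 g₂ f x'.2 ∧ g = g₂ ∩ blk δ₁ x.1 ∧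
          θ ∈ t₂ x.2 g₂ f x'.2}

/-! The swap `(q₁, q₂) ↦ (q₂, q₁)` maps the transitions of `A₁ × A₂` exactly onto those of
`A₂ × A₁`: joint transitions go to joint ones because `∩` and `∪` are commutative, and the
independent transitions of either factor trade places. So the graph of the swap is a
bisimulation, and the same bookkeeping shows that the rate function is transported. The arrival
rates agree because on disjoint alphabets `r₁ ∪ r₂` does not depend on the order of the union. -/

theorem isBisim_graph_of_equiv {N Q₁ Q₂ : Type} {δ₁ : TransRel N Q₁} {δ₂ : TransRel N Q₂}
    (e : Q₁ ≃ Q₂) (he : ∀ q g f q', δ₂ (e q) g f (e q') ↔ δ₁ q g f q') :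
    IsBisim δ₁ δ₂ (fun q₁ q₂ => q₂ = e q₁) := by
  rintro q₁ _ rfl
  refine ⟨fun g f q₁' h v hv => ⟨g, e q₁', (he _ _ _ _).2 h, hv, rfl⟩,
    fun g f q₂' h v hv => ⟨g, e.symm q₂', (he _ _ _ _).1 ?_, hv, by simp⟩⟩
  rwa [e.apply_symm_apply]

theorem bisimilar_of_equiv {N Q₁ Q₂ : Type} {δ₁ : TransRel N Q₁} {δ₂ : TransRel N Q₂}
    (e : Q₁ ≃ Q₂) (he : ∀ q g f q', δ₂ (e q) g f (e q') ↔ δ₁ q g f q') :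
    Bisimilar δ₁ δ₂ :=
  ⟨_, isBisim_graph_of_equiv e he, fun q₁ => ⟨e q₁, rfl⟩,
    fun q₂ => ⟨e.symm q₂, (e.apply_symm_apply q₂).symm⟩⟩

section Swap

variable {N Q₁ Q₂ : Type} [DecidableEq N]

theorem prodTrans.swap {δ₁ : TransRel N Q₁} {δ₂ : TransRel N Q₂} {x x' : Q₁ × Q₂}
    {g : Guard N} {f : Finset N} (h : prodTrans δ₁ δ₂ x g f x') :
    prodTrans δ₂ δ₁ x.swap g f x'.swap := by
  rcases h with ⟨g₁, f₁, g₂, f₂, h₁, h₂, rfl, rfl⟩ | ⟨hx, g₁, h₁, rfl⟩ | ⟨hx, g₂, h₂, rfl⟩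
  · exact Or.inl ⟨g₂, f₂, g₁, f₁, h₂, h₁, Set.inter_comm _ _, Finset.union_comm _ _⟩
  · exact Or.inr (Or.inr ⟨hx, g₁, h₁, rfl⟩)
  · exact Or.inr (Or.inl ⟨hx, g₂, h₂, rfl⟩)

theorem prodTrans_swap_iff (δ₁ : TransRel N Q₁) (δ₂ : TransRel N Q₂) (x : Q₁ × Q₂)
    (g : Guard N) (f : Finset N) (x' : Q₁ × Q₂) :
    prodTrans δ₂ δ₁ x.swap g f x'.swap ↔ prodTrans δ₁ δ₂ x g f x' :=
  ⟨fun h => by simpa using h.swap, prodTrans.swap⟩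

theorem prodRateFun_subset_swap (δ₁ : TransRel N Q₁) (δ₂ : TransRel N Q₂)
    (t₁ : RateFun N Q₁) (t₂ : RateFun N Q₂) (x x' : Q₁ × Q₂) (g : Guard N) (f : Finset N) :
    prodRateFun δ₁ δ₂ t₁ t₂ x g f x' ⊆ prodRateFun δ₂ δ₁ t₂ t₁ x.swap g f x'.swap := by
  rintro θ ((⟨g₁, f₁, g₂, f₂, h₁, h₂, rfl, rfl, hθ⟩ | ⟨hx, g₁, h₁, rfl, hθ⟩) |
    ⟨hx, g₂, h₂, rfl, hθ⟩)
  · exact Or.inl (Or.inl ⟨g₂, f₂, g₁, f₁, h₂, h₁, Set.inter_comm _ _, Finset.union_comm _ _,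
      hθ.symm⟩)
  · exact Or.inr ⟨hx, g₁, h₁, rfl, hθ⟩
  · exact Or.inl (Or.inr ⟨hx, g₂, h₂, rfl, hθ⟩)

theorem prodRateFun_swap (δ₁ : TransRel N Q₁) (δ₂ : TransRel N Q₂)
    (t₁ : RateFun N Q₁) (t₂ : RateFun N Q₂) (x x' : Q₁ × Q₂) (g : Guard N) (f : Finset N) :
    prodRateFun δ₂ δ₁ t₂ t₁ x.swap g f x'.swap = prodRateFun δ₁ δ₂ t₁ t₂ x g f x' :=
  (prodRateFun_subset_swap δ₂ δ₁ t₂ t₁ x.swap x'.swap g f).antisymm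
    (prodRateFun_subset_swap δ₁ δ₂ t₁ t₂ x x' g f)

end Swap

theorem ite_mem_comm_of_disjoint {N : Type} {α : Type*} [DecidableEq N] {s₁ s₂ : Finset N}
    (hdisj : Disjoint s₁ s₂) (r₁ r₂ : N → α) {n : N} (hn : n ∈ s₁ ∪ s₂) :
    (if n ∈ s₁ then r₁ n else r₂ n) = (if n ∈ s₂ then r₂ n else r₁ n) := by
  rcases Finset.mem_union.1 hn with h | h
  · simp [h, Finset.disjoint_left.1 hdisj h]
  · simp [h, Finset.disjoint_right.1 hdisj h]

theorem stmt_14_general {N Q₁ Q₂ : Type} [DecidableEq N]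
    (Sig₁ Sig₂ : Finset N) (hdisj : Disjoint Sig₁ Sig₂)
    (δ₁ : TransRel N Q₁) (δ₂ : TransRel N Q₂)
    (r₁ r₂ : N → ℝ) (t₁ : RateFun N Q₁) (t₂ : RateFun N Q₂) :
    IsBisim (prodTrans δ₁ δ₂) (prodTrans δ₂ δ₁) (fun x y => y = (x.2, x.1)) ∧
    Bisimilar (prodTrans δ₁ δ₂) (prodTrans δ₂ δ₁) ∧
    (∀ n ∈ Sig₁ ∪ Sig₂,
      (if n ∈ Sig₁ then r₁ n else r₂ n) = (if n ∈ Sig₂ then r₂ n else r₁ n)) ∧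
    (∀ (x x' : Q₁ × Q₂) (g : Guard N) (f : Finset N),
      prodRateFun δ₁ δ₂ t₁ t₂ x g f x' =
        prodRateFun δ₂ δ₁ t₂ t₁ (x.2, x.1) g f (x'.2, x'.1)) :=
  ⟨isBisim_graph_of_equiv (Equiv.prodComm Q₁ Q₂) (prodTrans_swap_iff δ₁ δ₂),
    bisimilar_of_equiv (Equiv.prodComm Q₁ Q₂) (prodTrans_swap_iff δ₁ δ₂),
    fun _ hn => ite_mem_comm_of_disjoint hdisj r₁ r₂ hn,
    fun x x' g f => (prodRateFun_swap δ₁ δ₂ t₁ t₂ x x' g f).symm⟩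

/-- The product of Stochastic Reo automata is commutative up to the
equivalence `∼`: the underlying Reo automata of `(A₁,r₁,t₁) × (A₂,r₂,t₂)` and
`(A₂,r₂,t₂) × (A₁,r₁,t₁)` are bisimilar via the swap pairing, the combined
arrival-rate functions `r₁ ∪ r₂` and `r₂ ∪ r₁` coincide on `Σ₁ ∪ Σ₂`, and the
combined rate functions `t` coincide up to the bisimulation pairing. -/
theorem stmt_14 {N Q₁ Q₂ : Type} [DecidableEq N]
    (Sig₁ Sig₂ : Finset N) (hdisj : Disjoint Sig₁ Sig₂)
    (δ₁ : TransRel N Q₁) (δ₂ : TransRel N Q₂)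
    (ha₁ : ∀ q g f q', δ₁ q g f q' → f ⊆ Sig₁)
    (ha₂ : ∀ q g f q', δ₂ q g f q' → f ⊆ Sig₂)
    (r₁ r₂ : N → ℝ) (t₁ : RateFun N Q₁) (t₂ : RateFun N Q₂) :
    IsBisim (prodTrans δ₁ δ₂) (prodTrans δ₂ δ₁) (fun x y => y = (x.2, x.1)) ∧
    Bisimilar (prodTrans δ₁ δ₂) (prodTrans δ₂ δ₁) ∧
    (∀ n ∈ Sig₁ ∪ Sig₂,
      (if n ∈ Sig₁ then r₁ n else r₂ n) = (if n ∈ Sig₂ then r₂ n else r₁ n)) ∧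
    (∀ (x x' : Q₁ × Q₂) (g : Guard N) (f : Finset N),
      prodRateFun δ₁ δ₂ t₁ t₂ x g f x' =
        prodRateFun δ₂ δ₁ t₂ t₁ (x.2, x.1) g f (x'.2, x'.1)) :=
  stmt_14_general Sig₁ Sig₂ hdisj δ₁ δ₂ r₁ r₂ t₁ t₂
end

section
/- If R is a bisimulation between Reo automata A₁ and A₂, and both automata are reactive, then bisimilar states agree on which atoms enable some firing: for (q₁,q₂) ∈ R and any atom α, α ≤ q₁^♯ if and only if α ≤ q₂^♯. -/
theorem mem_blk_iff {N Q : Type} {δ : TransRel N Q} {q : Q} {v : N → Bool} :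
    v ∈ blk δ q ↔ ∀ g f q', δ q g f q' → v ∉ g := by
  simp only [blk, Set.mem_compl_iff, Set.mem_iUnion, Set.mem_ofPred_eq, not_exists]
  exact ⟨fun h g f q' hδ => h g ⟨f, q', hδ⟩, fun h g ⟨f, q', hδ⟩ => h g f q' hδ⟩

namespace IsBisim

variable {N Q₁ Q₂ : Type} {δ₁ : TransRel N Q₁} {δ₂ : TransRel N Q₂} {R : Q₁ → Q₂ → Prop}

theorem symm (hR : IsBisim δ₁ δ₂ R) : IsBisim δ₂ δ₁ (flip R) :=
  fun q₂ q₁ hq => (hR q₁ q₂ hq).symm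

theorem mem_blk_of_mem_blk (hR : IsBisim δ₁ δ₂ R) {q₁ : Q₁} {q₂ : Q₂} (hq : R q₁ q₂)
    {v : N → Bool} (hv : v ∈ blk δ₁ q₁) : v ∈ blk δ₂ q₂ := by
  refine mem_blk_iff.2 fun g f q₂' hδ hvg => ?_
  obtain ⟨g', q₁', hδ', hvg', -⟩ := (hR q₁ q₂ hq).2 g f q₂' hδ v hvg
  exact mem_blk_iff.1 hv g' f q₁' hδ' hvg'

end IsBisim

theorem stmt_19_general {N Q₁ Q₂ : Type} (δ₁ : TransRel N Q₁) (δ₂ : TransRel N Q₂)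
    (R : Q₁ → Q₂ → Prop) (hR : IsBisim δ₁ δ₂ R)
    (q₁ : Q₁) (q₂ : Q₂) (hq : R q₁ q₂) (v : N → Bool) :
    v ∈ blk δ₁ q₁ ↔ v ∈ blk δ₂ q₂ :=
  ⟨hR.mem_blk_of_mem_blk hq, hR.symm.mem_blk_of_mem_blk hq⟩

/-- If `R` is a bisimulation between reactive Reo automata, then bisimilar
states agree on which atoms (truth assignments) enable some firing:
for `(q₁,q₂) ∈ R` and any atom `v`, `v ≤ q₁^♯ ↔ v ≤ q₂^♯`. -/
theorem stmt_19 {N Q₁ Q₂ : Type} (δ₁ : TransRel N Q₁) (δ₂ : TransRel N Q₂)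
    (R : Q₁ → Q₂ → Prop) (hR : IsBisim δ₁ δ₂ R)
    (h₁ : Reactive δ₁) (h₂ : Reactive δ₂)
    (q₁ : Q₁) (q₂ : Q₂) (hq : R q₁ q₂) (v : N → Bool) :
    v ∈ blk δ₁ q₁ ↔ v ∈ blk δ₂ q₂ :=
  stmt_19_general δ₁ δ₂ R hR q₁ q₂ hq v
end
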